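/- Let 1/2 < s < 1, N ≥ 1, and let m : ℝ → ℝ be any function with m(ξ) = 1 for |ξ| ≤ N and m(ξ) = (N/|ξ|)^{1-s} for |ξ| ≥ 2N. Then for any k with k ≥ 2N² (in particular k ≫ N), the numbers ξ₁ = ξ₂ = -k, ξ₃ = -8k, ξ₄ = (5 + 2√55/5)k, ξ₅ = (5 − 2√55/5)k, ξ₆ = 0 satisfy ξ₁ + ⋯ + ξ₆ = 0, ξ₁³ + ⋯ + ξ₆³ = 0, and m(ξ₁)²ξ₁³ + m(ξ₂)²ξ₂³ + ⋯ + m(ξ₆)²ξ₆³ ≠ 0. -/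

import Mathlib

/-!
Put `σ = 2s + 1 ∈ (2, 3)` and `a, b = ξ₄ / k, ξ₅ / k`. Every nonzero frequency satisfies `|ξ| ≥ 2N`,
where `m(ξ)² ξ³ = ± N^{2-2s} |ξ|^σ`, so the modified sum equals
`N^{2-2s} k^σ (a^σ + b^σ - 2 - 8^σ)`, while `ξ₆ = 0` contributes nothing whatever `m 0` is.
The bracket vanishes at `σ = 3` (this is the cancellation of cubes), and it is positive on `(2, 3)`:
writing `σ = 2 + t` and dividing by `8^t` it becomes
`a² (a/8)^t + b² (b/8)^t - 2 (1/8)^t - 64`, which is strictly decreasing on `[0, 1]`; for the `a`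
term because `a < 8`, for the other two because `b² log (8/b) > 2 log 8`.
-/

open Real Set

/-- `ξ₄ / k` and `ξ₅ / k` are the roots of `x² - 10x + 81/5`: this makes `ξ₄ + ξ₅ = 10k` and
`ξ₄³ + ξ₅³ = 514k³ = (1 + 1 + 8³)k³`, cancelling `ξ₁, ξ₂, ξ₃` in both sums. -/
noncomputable def rootPlus : ℝ := 5 + 2 * √55 / 5

noncomputable def rootMinus : ℝ := 5 - 2 * √55 / 5

lemma rootPlus_add_rootMinus : rootPlus + rootMinus = 10 := by
  unfold rootPlus rootMinus; ring

lemma rootPlus_pow_three_add_rootMinus_pow_three : rootPlus ^ 3 + rootMinus ^ 3 = 514 := by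
  have h55 : √55 ^ 2 = 55 := sq_sqrt (by norm_num)
  unfold rootPlus rootMinus
  linear_combination (24 / 5 : ℝ) * h55

lemma sqrt_fiftyFive_mem_Ioo : √55 ∈ Ioo (7.41 : ℝ) 7.42 :=
  ⟨(lt_sqrt (by norm_num)).2 (by norm_num), (sqrt_lt' (by norm_num)).2 (by norm_num)⟩

lemma rootPlus_mem_Ioo : rootPlus ∈ Ioo (7.9 : ℝ) 8 := by
  obtain ⟨h₁, h₂⟩ := sqrt_fiftyFive_mem_Ioo
  constructor <;> unfold rootPlus <;> linarith

lemma rootMinus_mem_Ioo : rootMinus ∈ Ioo (2.03 : ℝ) 2.04 := by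
  obtain ⟨h₁, h₂⟩ := sqrt_fiftyFive_mem_Ioo
  constructor <;> unfold rootMinus <;> linarith

lemma two_mul_log_eight_lt : 2 * log 8 < rootMinus ^ 2 * log (8 / rootMinus) := by
  obtain ⟨hb₁, hb₂⟩ := rootMinus_mem_Ioo
  have hb : 0 < rootMinus := by linarith
  have hlog8 : log 8 = 3 * log 2 := by
    rw [show (8 : ℝ) = 2 ^ 3 by norm_num, log_pow]; norm_num
  have hlog_b : log rootMinus ≤ rootMinus - 1 := log_le_sub_one_of_pos hb
  have hb_sq : 4.12 < rootMinus ^ 2 := by nlinarith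
  have hlog2 := log_two_gt_d9
  rw [log_div (by norm_num) hb.ne', hlog8]
  nlinarith [mul_le_mul_of_nonneg_left hlog_b (sq_nonneg rootMinus),
    mul_pos (sub_pos.2 hb_sq) (sub_pos.2 hlog2)]

lemma hasDerivAt_const_mul_rpow {r : ℝ} (hr : 0 < r) (c x : ℝ) :
    HasDerivAt (fun x => c * r ^ x) (c * (r ^ x * log r)) x :=
  (hasStrictDerivAt_const_rpow hr x).hasDerivAt.const_mul c

lemma strictAntiOn_rootMinus_sub :
    StrictAntiOn (fun x : ℝ => rootMinus ^ 2 * (rootMinus / 8) ^ x - 2 * (1 / 8) ^ x) (Icc 0 1) := by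
  obtain ⟨hb₁, hb₂⟩ := rootMinus_mem_Ioo
  have hb : 0 < rootMinus := by linarith
  have hderiv : ∀ x, HasDerivAt (fun x : ℝ => rootMinus ^ 2 * (rootMinus / 8) ^ x - 2 * (1 / 8) ^ x)
      ((1 / 8) ^ x * (2 * log 8 - rootMinus ^ 2 * rootMinus ^ x * log (8 / rootMinus))) x := by
    intro x
    refine ((hasDerivAt_const_mul_rpow (by positivity) _ x).sub
      (hasDerivAt_const_mul_rpow (by norm_num) _ x)).congr_deriv ?_
    rw [div_eq_mul_one_div rootMinus, mul_rpow hb.le (by norm_num), log_mul hb.ne' (by norm_num),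
      log_div (by norm_num) hb.ne', one_div, log_inv]
    ring
  refine strictAntiOn_of_deriv_neg (convex_Icc 0 1)
    (fun x _ => (hderiv x).continuousAt.continuousWithinAt) fun x hx => ?_
  rw [interior_Icc] at hx
  rw [(hderiv x).deriv]
  refine mul_neg_of_pos_of_neg (by positivity) ?_
  have hbx : 1 ≤ rootMinus ^ x := one_le_rpow (by linarith) hx.1.le
  have hlog : 0 < log (8 / rootMinus) := log_pos ((one_lt_div hb).2 (by linarith))
  nlinarith [two_mul_log_eight_lt, mul_le_mul_of_nonneg_right hbx (by positivity :
    0 ≤ rootMinus ^ 2 * log (8 / rootMinus))]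

lemma rpow_two_add_eq_rpow_mul {r c : ℝ} (hr : 0 < r) (hc : 0 < c) (t : ℝ) :
    r ^ (2 + t) = c ^ t * (r ^ 2 * (r / c) ^ t) := by
  have hct : 0 < c ^ t := by positivity
  rw [rpow_add hr, rpow_two, div_rpow hr.le hc.le]
  field_simp

theorem two_add_eight_rpow_lt {σ : ℝ} (h₂ : 2 < σ) (h₃ : σ < 3) :
    2 + 8 ^ σ < rootPlus ^ σ + rootMinus ^ σ := by
  obtain ⟨ha₁, ha₂⟩ := rootPlus_mem_Ioo
  obtain ⟨hb₁, hb₂⟩ := rootMinus_mem_Ioo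
  have ha : 0 < rootPlus := by linarith
  have hb : 0 < rootMinus := by linarith
  obtain ⟨t, rfl⟩ : ∃ t, σ = 2 + t := ⟨σ - 2, by ring⟩
  have hplus : rootPlus ^ 2 * (rootPlus / 8) ^ (1 : ℝ) < rootPlus ^ 2 * (rootPlus / 8) ^ t :=
    mul_lt_mul_of_pos_left (rpow_lt_rpow_of_exponent_gt (by positivity)
      ((div_lt_one (by norm_num)).2 ha₂) (by linarith)) (by positivity)
  have hminus := strictAntiOn_rootMinus_sub (a := t) ⟨by linarith, by linarith⟩
    ⟨zero_le_one, le_refl 1⟩ (by linarith)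
  have h8 : (0 : ℝ) < 8 ^ t := by positivity
  simp only [rpow_one] at hplus hminus
  have h8pos : (0 : ℝ) < 8 := by norm_num
  rw [rpow_two_add_eq_rpow_mul ha h8pos, rpow_two_add_eq_rpow_mul hb h8pos,
    rpow_two_add_eq_rpow_mul h8pos h8pos]
  have hcubes : rootPlus ^ 2 * (rootPlus / 8) + (rootMinus ^ 2 * (rootMinus / 8) - 2 * (1 / 8))
      = 64 := by
    linear_combination (1 / 8 : ℝ) * rootPlus_pow_three_add_rootMinus_pow_three
  have hinv : (8 : ℝ) ^ t * (1 / 8) ^ t = 1 := by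
    rw [← mul_rpow (by norm_num) (by norm_num)]; norm_num
  rw [div_self (by norm_num : (8 : ℝ) ≠ 0), one_rpow]
  nlinarith

lemma div_rpow_sq_mul_pow_three {N x : ℝ} (s : ℝ) (hN : 0 ≤ N) (hx : 0 < x) :
    ((N / x) ^ (1 - s)) ^ 2 * x ^ 3 = N ^ (2 - 2 * s) * x ^ (2 * s + 1) := by
  have hx3 : x ^ (2 - 2 * s) * x ^ (2 * s + 1) = x ^ 3 := by
    rw [← rpow_add hx, ← rpow_natCast]; ring_nf
  rw [← rpow_natCast, ← rpow_mul (div_nonneg hN hx.le), div_rpow hN hx.le, ← hx3]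
  have hx_rpow : (0 : ℝ) < x ^ (2 - 2 * s) := by positivity
  field_simp
  ring_nf

lemma sq_mul_pow_three_of_two_mul_le {s N : ℝ} {m : ℝ → ℝ}
    (hm_high : ∀ ξ : ℝ, |ξ| ≥ 2 * N → m ξ = (N / |ξ|) ^ (1 - s)) (hN : 0 < N) {x : ℝ}
    (hx : 2 * N ≤ x) : m x ^ 2 * x ^ 3 = N ^ (2 - 2 * s) * x ^ (2 * s + 1) := by
  have hx0 : 0 < x := by linarith
  rw [hm_high x (by rwa [abs_of_pos hx0]), abs_of_pos hx0, div_rpow_sq_mul_pow_three s hN.le hx0]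

lemma sq_mul_neg_pow_three_of_two_mul_le {s N : ℝ} {m : ℝ → ℝ}
    (hm_high : ∀ ξ : ℝ, |ξ| ≥ 2 * N → m ξ = (N / |ξ|) ^ (1 - s)) (hN : 0 < N) {x : ℝ}
    (hx : 2 * N ≤ x) : m (-x) ^ 2 * (-x) ^ 3 = -(N ^ (2 - 2 * s) * x ^ (2 * s + 1)) := by
  have hx0 : 0 < x := by linarith
  rw [hm_high (-x) (by rwa [abs_neg, abs_of_pos hx0]), abs_neg, abs_of_pos hx0, neg_pow,
    ← div_rpow_sq_mul_pow_three s hN.le hx0]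
  ring

theorem M6_not_well_defined_general (s N : ℝ) (hs : 1/2 < s) (hs1 : s < 1) (hN : 1 ≤ N)
    (m : ℝ → ℝ)
    (hm_high : ∀ ξ : ℝ, |ξ| ≥ 2*N → m ξ = (N/|ξ|)^(1-s))
    (k : ℝ) (hk : k ≥ 2*N^2)
    (ξ₁ ξ₂ ξ₃ ξ₄ ξ₅ ξ₆ : ℝ)
    (h1 : ξ₁ = -k) (h2 : ξ₂ = -k) (h3 : ξ₃ = -8*k)
    (h4 : ξ₄ = (5 + 2*Real.sqrt 55/5)*k) (h5 : ξ₅ = (5 - 2*Real.sqrt 55/5)*k)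
    (h6 : ξ₆ = 0) :
    ξ₁ + ξ₂ + ξ₃ + ξ₄ + ξ₅ + ξ₆ = 0 ∧
    ξ₁^3 + ξ₂^3 + ξ₃^3 + ξ₄^3 + ξ₅^3 + ξ₆^3 = 0 ∧
    (m ξ₁)^2*ξ₁^3 + (m ξ₂)^2*ξ₂^3 + (m ξ₃)^2*ξ₃^3 +
      (m ξ₄)^2*ξ₄^3 + (m ξ₅)^2*ξ₅^3 + (m ξ₆)^2*ξ₆^3 ≠ 0 := by
  have hN0 : 0 < N := by linarith
  have hkN : 2 * N ≤ k := by nlinarith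
  have hk0 : 0 < k := by linarith
  obtain ⟨ha, -⟩ := rootPlus_mem_Ioo
  obtain ⟨hb, -⟩ := rootMinus_mem_Ioo
  replace h4 : ξ₄ = rootPlus * k := h4
  replace h5 : ξ₅ = rootMinus * k := h5
  subst h1 h2 h3 h4 h5 h6
  refine ⟨by linear_combination k * rootPlus_add_rootMinus,
    by linear_combination k ^ 3 * rootPlus_pow_three_add_rootMinus_pow_three, ?_⟩
  rw [neg_mul, sq_mul_neg_pow_three_of_two_mul_le hm_high hN0 hkN,
    sq_mul_neg_pow_three_of_two_mul_le hm_high hN0 (by linarith),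
    sq_mul_pow_three_of_two_mul_le hm_high hN0 (by nlinarith),
    sq_mul_pow_three_of_two_mul_le hm_high hN0 (by nlinarith),
    mul_rpow (by norm_num) hk0.le, mul_rpow (by linarith) hk0.le, mul_rpow (by linarith) hk0.le]
  have hσ := two_add_eight_rpow_lt (σ := 2 * s + 1) (by linarith) (by linarith)
  have hpos : 0 < N ^ (2 - 2 * s) * k ^ (2 * s + 1) *
      (rootPlus ^ (2 * s + 1) + rootMinus ^ (2 * s + 1) - (2 + 8 ^ (2 * s + 1))) :=
    mul_pos (by positivity) (sub_pos.2 hσ)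
  exact ne_of_gt (hpos.trans_eq (by ring))

theorem M6_not_well_defined (s N : ℝ) (hs : 1/2 < s) (hs1 : s < 1) (hN : 1 ≤ N)
    (m : ℝ → ℝ)
    (hm_low : ∀ ξ : ℝ, |ξ| ≤ N → m ξ = 1)
    (hm_high : ∀ ξ : ℝ, |ξ| ≥ 2*N → m ξ = (N/|ξ|)^(1-s))
    (k : ℝ) (hk : k ≥ 2*N^2)
    (ξ₁ ξ₂ ξ₃ ξ₄ ξ₅ ξ₆ : ℝ)
    (h1 : ξ₁ = -k) (h2 : ξ₂ = -k) (h3 : ξ₃ = -8*k)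
    (h4 : ξ₄ = (5 + 2*Real.sqrt 55/5)*k) (h5 : ξ₅ = (5 - 2*Real.sqrt 55/5)*k)
    (h6 : ξ₆ = 0) :
    ξ₁ + ξ₂ + ξ₃ + ξ₄ + ξ₅ + ξ₆ = 0 ∧
    ξ₁^3 + ξ₂^3 + ξ₃^3 + ξ₄^3 + ξ₅^3 + ξ₆^3 = 0 ∧
    (m ξ₁)^2*ξ₁^3 + (m ξ₂)^2*ξ₂^3 + (m ξ₃)^2*ξ₃^3 +
      (m ξ₄)^2*ξ₄^3 + (m ξ₅)^2*ξ₅^3 + (m ξ₆)^2*ξ₆^3 ≠ 0 :=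
  M6_not_well_defined_general s N hs hs1 hN m hm_high k hk ξ₁ ξ₂ ξ₃ ξ₄ ξ₅ ξ₆ h1 h2 h3 h4 h5 h6
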